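/- arXiv:1803.11139 — 2 statements merged into one kernel-verified Lean document; each statement's English description precedes it below -/
import Mathlib

section
/- In a sequential product space, for a sharp effect p and an arbitrary effect a: a ≤ p if and only if p & a = a & p = a, if and only if (1-p) & a = 0. -/
open scoped BigOperators

/-- A sequential product space: an order unit space `(V, ≤, unit)` with a binary
operation `seq` on its effects satisfying axioms (S1)-(S7). -/
structure SPS (V : Type*) [NormedAddCommGroup V] [NormedSpace ℝ V] [PartialOrder V] where
  unit : V
  seq : V → V → V
  /-- The effects: elements `a` with `0 ≤ a ≤ unit`. -/
  Eff : V → Prop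
  eff_iff : ∀ a : V, Eff a ↔ 0 ≤ a ∧ a ≤ unit
  eff_unit : Eff unit
  /-- `V` is an ordered vector space. -/
  add_le_add_right' : ∀ a b c : V, a ≤ b → a + c ≤ b + c
  smul_le_smul' : ∀ (r : ℝ) (a b : V), 0 ≤ r → a ≤ b → r • a ≤ r • b
  /-- `unit` is a strong unit. -/
  strong : ∀ a : V, ∃ n : ℕ, -((n : ℝ) • unit) ≤ a ∧ a ≤ (n : ℝ) • unit
  /-- Archimedean property. -/
  arch : ∀ a : V, (∀ n : ℕ, a ≤ ((n : ℝ) + 1)⁻¹ • unit) → a ≤ 0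
  /-- The norm of `V` is the order-unit norm. -/
  norm_def : ∀ a : V, ‖a‖ = sInf {r : ℝ | 0 ≤ r ∧ -(r • unit) ≤ a ∧ a ≤ r • unit}
  seq_eff : ∀ a b : V, Eff a → Eff b → Eff (seq a b)
  /-- (S1) additivity in the second argument. -/
  s1 : ∀ a b c : V, Eff a → Eff b → Eff c → Eff (b + c) →
      seq a (b + c) = seq a b + seq a c
  /-- (S2) norm-continuity in the first argument. -/
  s2 : ∀ b : V, Eff b → ContinuousOn (fun a => seq a b) {a : V | Eff a}
  /-- (S3) unitality. -/
  s3 : ∀ a : V, Eff a → seq unit a = a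
  /-- (S4) orthogonal effects are compatible. -/
  s4 : ∀ a b : V, Eff a → Eff b → seq a b = 0 → seq b a = 0
  /-- (S5) associativity for compatible effects. -/
  s5 : ∀ a b c : V, Eff a → Eff b → Eff c → seq a b = seq b a →
      seq a (seq b c) = seq (seq a b) c
  /-- (S6) compatibility is preserved by complements. -/
  s6a : ∀ a b : V, Eff a → Eff b → seq a b = seq b a →
      seq a (unit - b) = seq (unit - b) a
  /-- (S6) compatibility is preserved by sums. -/
  s6b : ∀ a b c : V, Eff a → Eff b → Eff c → Eff (b + c) →
      seq a b = seq b a → seq a c = seq c a → seq a (b + c) = seq (b + c) a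
  /-- (S7) compatibility is preserved by the product. -/
  s7 : ∀ a b c : V, Eff a → Eff b → Eff c →
      seq a b = seq b a → seq a c = seq c a → seq a (seq b c) = seq (seq b c) a

namespace SPS

variable {V : Type*} [NormedAddCommGroup V] [NormedSpace ℝ V] [PartialOrder V]

/-- `a` and `b` are compatible: `a & b = b & a`. -/
def Compat (S : SPS V) (a b : V) : Prop := S.seq a b = S.seq b a

/-- An effect `p` is sharp when the only effect below both `p` and `unit - p` is `0`. -/
def Sharp (S : SPS V) (p : V) : Prop :=
  S.Eff p ∧ ∀ b : V, S.Eff b → b ≤ p → b ≤ S.unit - p → b = 0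

/-- An effect `p` is sharp (idempotence formulation): `p & p = p`. -/
def SharpI (S : SPS V) (p : V) : Prop := S.Eff p ∧ S.seq p p = p

/-- An effect `p` is atomic when `p ≠ 0` and every effect below `p` is a multiple of `p`. -/
def Atomic (S : SPS V) (p : V) : Prop :=
  S.Eff p ∧ p ≠ 0 ∧ ∀ a : V, S.Eff a → a ≤ p → ∃ t : ℝ, 0 ≤ t ∧ t ≤ 1 ∧ a = t • p

/-- `c` is the least sharp effect above `a` (the ceiling `⌈a⌉`). -/
def IsCeil (S : SPS V) (a c : V) : Prop :=
  S.SharpI c ∧ a ≤ c ∧ ∀ d : V, S.SharpI d → a ≤ d → c ≤ d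

/-- `f` is the greatest sharp effect below `a` (the floor `⌊a⌋`). -/
def IsFloor (S : SPS V) (a f : V) : Prop :=
  S.SharpI f ∧ f ≤ a ∧ ∀ d : V, S.SharpI d → d ≤ a → d ≤ f

end SPS

section Aux

variable {V : Type*} [NormedAddCommGroup V] [NormedSpace ℝ V] [PartialOrder V] (S : SPS V)

lemma SPS.sub_nonneg' (S : SPS V) {a b : V} (h : a ≤ b) : 0 ≤ b - a := by
  have := S.add_le_add_right' a b (-a) h
  simpa [sub_eq_add_neg] using this

lemma SPS.le_of_sub_nonneg' (S : SPS V) {a b : V} (h : 0 ≤ b - a) : a ≤ b := by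
  have := S.add_le_add_right' 0 (b - a) a h
  simpa using this

lemma SPS.add_nonneg' (S : SPS V) {x y : V} (hx : 0 ≤ x) (hy : 0 ≤ y) : 0 ≤ x + y := by
  have := S.add_le_add_right' 0 x y hx
  rw [zero_add] at this
  exact le_trans hy this

lemma SPS.le_add_of_nonneg' (S : SPS V) {x y : V} (hy : 0 ≤ y) : x ≤ x + y := by
  have := S.add_le_add_right' 0 y x hy
  simpa [add_comm] using this

lemma SPS.eff_zero : S.Eff 0 :=
  (S.eff_iff 0).2 ⟨le_refl 0, ((S.eff_iff S.unit).1 S.eff_unit).1⟩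

lemma SPS.eff_compl {p : V} (hp : S.Eff p) : S.Eff (S.unit - p) := by
  obtain ⟨h0, h1⟩ := (S.eff_iff p).1 hp
  refine (S.eff_iff _).2 ⟨S.sub_nonneg' h1, ?_⟩
  apply S.le_of_sub_nonneg'
  simpa [sub_sub_cancel] using h0

lemma SPS.seq_zero {a : V} (ha : S.Eff a) : S.seq a 0 = 0 := by
  have h := S.s1 a 0 0 ha S.eff_zero S.eff_zero (by simpa using S.eff_zero)
  rw [add_zero] at h
  exact add_eq_left.mp h.symm

lemma SPS.zero_seq {a : V} (ha : S.Eff a) : S.seq 0 a = 0 :=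
  S.s4 a 0 ha S.eff_zero (S.seq_zero ha)

lemma SPS.seq_unit {a : V} (ha : S.Eff a) : S.seq a S.unit = a := by
  have h := S.s6a a 0 ha S.eff_zero (by rw [S.seq_zero ha, S.zero_seq ha])
  rw [sub_zero] at h
  rw [h, S.s3 a ha]

lemma SPS.seq_mono {a b c : V} (ha : S.Eff a) (hb : S.Eff b) (hc : S.Eff c)
    (h : b ≤ c) : S.seq a b ≤ S.seq a c := by
  obtain ⟨hb0, hb1⟩ := (S.eff_iff b).1 hb
  obtain ⟨hc0, hc1⟩ := (S.eff_iff c).1 hc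
  have hd : S.Eff (c - b) := by
    refine (S.eff_iff _).2 ⟨S.sub_nonneg' h, ?_⟩
    apply S.le_of_sub_nonneg'
    have : S.unit - (c - b) = (S.unit - c) + b := by abel
    rw [this]
    exact S.add_nonneg' (S.sub_nonneg' hc1) hb0
  have hbc : b + (c - b) = c := by abel
  have h1 := S.s1 a b (c - b) ha hb hd (by rw [hbc]; exact hc)
  rw [hbc] at h1
  rw [h1]
  exact S.le_add_of_nonneg' (((S.eff_iff _).1 (S.seq_eff a (c - b) ha hd)).1)

lemma SPS.seq_le_left {a b : V} (ha : S.Eff a) (hb : S.Eff b) : S.seq a b ≤ a := by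
  have := S.seq_mono ha hb S.eff_unit (((S.eff_iff b).1 hb).2)
  rwa [S.seq_unit ha] at this

lemma SPS.compat_compl_self {p : V} (hp : S.Eff p) :
    S.seq p (S.unit - p) = S.seq (S.unit - p) p :=
  S.s6a p p hp hp rfl

lemma SPS.sharp_orth {p : V} (hp : S.Sharp p) : S.seq p (S.unit - p) = 0 := by
  obtain ⟨hpe, hsh⟩ := hp
  have hcpl := S.eff_compl hpe
  have hceff : S.Eff (S.seq p (S.unit - p)) := S.seq_eff _ _ hpe hcpl
  have h1 : S.seq p (S.unit - p) ≤ p := S.seq_le_left hpe hcpl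
  have h2 : S.seq p (S.unit - p) ≤ S.unit - p := by
    rw [S.compat_compl_self hpe]
    exact S.seq_le_left hcpl hpe
  exact hsh _ hceff h1 h2

end Aux

/-- for sharp `p`: `a ≤ p` iff `p & a = a & p = a` iff `(1-p) & a = 0`. -/
theorem le_sharp_iff {V : Type*} [NormedAddCommGroup V] [NormedSpace ℝ V]
    [PartialOrder V] (S : SPS V) (p a : V) (hp : S.Sharp p) (ha : S.Eff a) :
    (a ≤ p ↔ S.seq p a = a ∧ S.seq a p = a) ∧
      (a ≤ p ↔ S.seq (S.unit - p) a = 0) := by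
  have hpe : S.Eff p := hp.1
  have hcpl : S.Eff (S.unit - p) := S.eff_compl hpe
  -- (i) a ≤ p → (1-p) & a = 0
  have h1 : a ≤ p → S.seq (S.unit - p) a = 0 := by
    intro h
    have hle : S.seq (S.unit - p) a ≤ S.seq (S.unit - p) p :=
      S.seq_mono hcpl ha hpe h
    have h0 : S.seq (S.unit - p) p = 0 := by
      rw [← S.compat_compl_self hpe]; exact S.sharp_orth hp
    rw [h0] at hle
    exact le_antisymm hle (((S.eff_iff _).1 (S.seq_eff _ _ hcpl ha)).1)
  -- (ii) (1-p) & a = 0 → p & a = a ∧ a & p = a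
  have h2 : S.seq (S.unit - p) a = 0 → S.seq p a = a ∧ S.seq a p = a := by
    intro h
    have h4 : S.seq a (S.unit - p) = 0 := S.s4 (S.unit - p) a hcpl ha h
    have hcomp : S.seq a (S.unit - p) = S.seq (S.unit - p) a := by rw [h4, h]
    have hc2 := S.s6a a (S.unit - p) ha hcpl hcomp
    rw [sub_sub_cancel] at hc2
    have hsum : p + (S.unit - p) = S.unit := by abel
    have hadd := S.s1 a p (S.unit - p) ha hpe hcpl (by rw [hsum]; exact S.eff_unit)
    rw [hsum, S.seq_unit ha, h4, add_zero] at hadd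
    exact ⟨by rw [← hc2, ← hadd], hadd.symm⟩
  -- (iii) p & a = a → a ≤ p
  have h3 : S.seq p a = a → a ≤ p := by
    intro h
    rw [← h]
    exact S.seq_le_left hpe ha
  exact ⟨⟨fun h => h2 (h1 h), fun h => h3 h.1⟩,
    ⟨h1, fun h => h3 (h2 h).1⟩⟩
end

section
/- In a sequential product space, if p is a sharp effect and a is an effect with p & a = 0, then p + a ≤ 1, and p + a is the least upper bound of p and a among effects. Moreover, in that case p + a is sharp if and only if a is sharp. -/
open scoped BigOperators

namespace SPS

variable {V : Type*} [NormedAddCommGroup V] [NormedSpace ℝ V] [PartialOrder V]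

lemma le_iff_sub (S : SPS V) {a b : V} : a ≤ b ↔ 0 ≤ b - a := by
  constructor
  · intro h
    have := S.add_le_add_right' a b (-a) h
    simpa [sub_eq_add_neg] using this
  · intro h
    have := S.add_le_add_right' 0 (b - a) a h
    simpa using this

lemma nonneg_add (S : SPS V) {a b : V} (ha : 0 ≤ a) (hb : 0 ≤ b) : 0 ≤ a + b := by
  have h1 : (0:V) + b ≤ a + b := S.add_le_add_right' 0 a b ha
  have h2 : (0:V) ≤ 0 + b := by simpa using hb
  exact h2.trans h1

lemma eff_zero_s7 (S : SPS V) : S.Eff 0 := by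
  rw [S.eff_iff]
  exact ⟨le_refl 0, ((S.eff_iff S.unit).mp S.eff_unit).1⟩

lemma eff_nonneg (S : SPS V) {a : V} (h : S.Eff a) : 0 ≤ a := ((S.eff_iff a).mp h).1

lemma eff_le_unit (S : SPS V) {a : V} (h : S.Eff a) : a ≤ S.unit := ((S.eff_iff a).mp h).2

lemma eff_sub (S : SPS V) {a b : V} (ha : S.Eff a) (hb : S.Eff b) (hab : a ≤ b) : S.Eff (b - a) := by
  rw [S.eff_iff]
  constructor
  · exact (S.le_iff_sub).mp hab
  · rw [S.le_iff_sub]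
    have : S.unit - (b - a) = (S.unit - b) + a := by abel
    rw [this]
    exact S.nonneg_add ((S.le_iff_sub).mp (S.eff_le_unit hb)) (S.eff_nonneg ha)

lemma eff_one_sub (S : SPS V) {a : V} (ha : S.Eff a) : S.Eff (S.unit - a) :=
  S.eff_sub ha S.eff_unit (S.eff_le_unit ha)

lemma eff_add (S : SPS V) {a b : V} (ha : S.Eff a) (hb : S.Eff b) (hab : a + b ≤ S.unit) :
    S.Eff (a + b) := by
  rw [S.eff_iff]
  exact ⟨S.nonneg_add (S.eff_nonneg ha) (S.eff_nonneg hb), hab⟩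

lemma seq_zero_s7 (S : SPS V) {a : V} (ha : S.Eff a) : S.seq a 0 = 0 := by
  have h := S.s1 a 0 0 ha S.eff_zero_s7 S.eff_zero_s7 (by simpa using S.eff_zero_s7)
  rw [add_zero] at h
  exact (left_eq_add.mp h)

lemma zero_seq_s7 (S : SPS V) {a : V} (ha : S.Eff a) : S.seq 0 a = 0 :=
  S.s4 a 0 ha S.eff_zero_s7 (S.seq_zero_s7 ha)

lemma seq_unit_s7 (S : SPS V) {a : V} (ha : S.Eff a) : S.seq a S.unit = a := by
  have h := S.s6a a 0 ha S.eff_zero_s7 (by rw [S.seq_zero_s7 ha, S.zero_seq_s7 ha])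
  rw [sub_zero] at h
  rw [h, S.s3 a ha]

lemma seq_mono_s7 (S : SPS V) {a b c : V} (ha : S.Eff a) (hb : S.Eff b) (hc : S.Eff c) (hbc : b ≤ c) :
    S.seq a b ≤ S.seq a c := by
  have hcb : S.Eff (c - b) := S.eff_sub hb hc hbc
  have h := S.s1 a b (c - b) ha hb hcb (by simpa using hc)
  rw [add_sub_cancel] at h
  rw [h]
  rw [S.le_iff_sub, add_sub_cancel_left]
  exact S.eff_nonneg (S.seq_eff a (c - b) ha hcb)

/-- splitting `a & 1 = a & b + a & (1-b)`. -/
lemma seq_split (S : SPS V) {a b : V} (ha : S.Eff a) (hb : S.Eff b) :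
    a = S.seq a b + S.seq a (S.unit - b) := by
  have h := S.s1 a b (S.unit - b) ha hb (S.eff_one_sub hb)
      (by simpa using S.eff_unit)
  rw [add_sub_cancel] at h
  rw [← h, S.seq_unit_s7 ha]

/-- Orthogonality: `a & b = 0` implies `b ≤ 1 - a`. -/
lemma orth_le (S : SPS V) {a b : V} (ha : S.Eff a) (hb : S.Eff b) (h : S.seq a b = 0) :
    b ≤ S.unit - a := by
  have hba : S.seq b a = 0 := S.s4 a b ha hb h
  have hsplit := S.seq_split hb ha
  rw [hba, zero_add] at hsplit
  have hcompat := S.s6a b a hb ha (by rw [h, hba])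
  rw [← hsplit] at hcompat
  calc b = S.seq (S.unit - a) b := hcompat
    _ ≤ S.seq (S.unit - a) S.unit := S.seq_mono_s7 (S.eff_one_sub ha) hb S.eff_unit
        (S.eff_le_unit hb)
    _ = S.unit - a := S.seq_unit_s7 (S.eff_one_sub ha)

/-- For sharp `q`, `q & (1 - q) = 0`. -/
lemma sharp_seq_compl (S : SPS V) {q : V} (hq : S.SharpI q) : S.seq q (S.unit - q) = 0 := by
  have h := S.seq_split hq.1 hq.1
  rw [hq.2] at h
  exact (left_eq_add.mp h)

/-- `1 - q` is sharp when `q` is sharp. -/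
lemma sharp_compl (S : SPS V) {q : V} (hq : S.SharpI q) : S.SharpI (S.unit - q) := by
  refine ⟨S.eff_one_sub hq.1, ?_⟩
  have h0 : S.seq (S.unit - q) q = 0 := S.s4 q (S.unit - q) hq.1 (S.eff_one_sub hq.1)
    (S.sharp_seq_compl hq)
  have h := S.seq_split (S.eff_one_sub hq.1) hq.1
  rw [h0, zero_add] at h
  exact h.symm

/-- For sharp `q` and effect `c ≤ q`, `q & c = c` and `c & q = c`. -/
lemma sharp_absorb (S : SPS V) {q c : V} (hq : S.SharpI q) (hc : S.Eff c) (hcq : c ≤ q) :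
    S.seq q c = c ∧ S.seq c q = c := by
  have h0 : S.seq (S.unit - q) q = 0 := S.s4 q (S.unit - q) hq.1 (S.eff_one_sub hq.1)
    (S.sharp_seq_compl hq)
  have h1 : S.seq (S.unit - q) c ≤ 0 := by
    calc S.seq (S.unit - q) c ≤ S.seq (S.unit - q) q :=
          S.seq_mono_s7 (S.eff_one_sub hq.1) hc hq.1 hcq
      _ = 0 := h0
  have h2 : S.seq (S.unit - q) c = 0 :=
    le_antisymm h1 (S.eff_nonneg (S.seq_eff _ _ (S.eff_one_sub hq.1) hc))
  have h3 : S.seq c (S.unit - q) = 0 := S.s4 (S.unit - q) c (S.eff_one_sub hq.1) hc h2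
  have h4 := S.seq_split hc hq.1
  rw [h3, add_zero] at h4
  have h5 := S.s6a c (S.unit - q) hc (S.eff_one_sub hq.1) (by rw [h2, h3])
  rw [sub_sub_cancel] at h5
  exact ⟨by rw [← h5, ← h4], h4.symm⟩

end SPS

/-- if `p` is sharp and `p & a = 0` then `p + a ≤ 1`, `p + a` is the least
upper bound of `p` and `a` among effects, and `p + a` is sharp iff `a` is sharp. -/
theorem sharp_orthogonal_sum {V : Type*} [NormedAddCommGroup V] [NormedSpace ℝ V]
    [PartialOrder V] (S : SPS V) (p a : V) (hp : S.SharpI p) (ha : S.Eff a)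
    (h : S.seq p a = 0) :
    p + a ≤ S.unit ∧ p ≤ p + a ∧ a ≤ p + a ∧
      (∀ b : V, S.Eff b → p ≤ b → a ≤ b → p + a ≤ b) ∧
      (S.SharpI (p + a) ↔ S.SharpI a) := by
  have hap : S.seq a p = 0 := S.s4 p a hp.1 ha h
  have hcpa : S.seq p a = S.seq a p := by rw [h, hap]
  have halep : a ≤ S.unit - p := S.orth_le hp.1 ha h
  have hsum : p + a ≤ S.unit := by
    rw [S.le_iff_sub]
    have e : S.unit - (p + a) = (S.unit - p) - a := by abel
    rw [e]
    exact (S.le_iff_sub).mp halep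
  have hEs : S.Eff (p + a) := S.eff_add hp.1 ha hsum
  have hple : p ≤ p + a := by
    rw [S.le_iff_sub, add_sub_cancel_left]; exact S.eff_nonneg ha
  have hale : a ≤ p + a := by
    rw [S.le_iff_sub]
    have e : p + a - a = p := by abel
    rw [e]; exact S.eff_nonneg hp.1
  have hcomp_sp : S.seq p (p + a) = S.seq (p + a) p :=
    S.s6b p p a hp.1 hp.1 ha hEs rfl hcpa
  have hcomp_sa : S.seq a (p + a) = S.seq (p + a) a :=
    S.s6b a p a ha hp.1 ha hEs hcpa.symm rfl
  have hps : S.seq p (p + a) = p := by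
    rw [S.s1 p p a hp.1 hp.1 ha hEs, hp.2, h, add_zero]
  have has : S.seq a (p + a) = S.seq a a := by
    rw [S.s1 a p a ha hp.1 ha hEs, hap, zero_add]
  refine ⟨hsum, hple, hale, ?_, ?_⟩
  · intro b hb hpb hab
    have hpb' : S.seq p b = p := by
      have h1 : S.seq p p ≤ S.seq p b := S.seq_mono_s7 hp.1 hp.1 hb hpb
      have h2 : S.seq p b ≤ S.seq p S.unit := S.seq_mono_s7 hp.1 hb S.eff_unit (S.eff_le_unit hb)
      rw [hp.2] at h1; rw [S.seq_unit_s7 hp.1] at h2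
      exact le_antisymm h2 h1
    have hEd : S.Eff (b - p) := S.eff_sub hp.1 hb hpb
    have hpd : S.seq p (b - p) = 0 := by
      have h3 := S.s1 p p (b - p) hp.1 hp.1 hEd (by simpa using hb)
      rw [add_sub_cancel, hpb', hp.2] at h3
      exact (left_eq_add.mp h3)
    have hdp : S.seq (b - p) p = 0 := S.s4 p (b - p) hp.1 hEd hpd
    have hcompb : S.seq p b = S.seq b p := by
      have h4 := S.s6b p p (b - p) hp.1 hp.1 hEd (by simpa using hb) rfl (by rw [hpd, hdp])
      simpa using h4
    have hsplitb := S.seq_split hb hp.1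
    rw [← hcompb, hpb'] at hsplitb
    have hb1p : S.seq b (S.unit - p) = b - p := eq_sub_of_add_eq' hsplitb.symm
    have hcompb2 := S.s6a b p hb hp.1 hcompb.symm
    rw [hb1p] at hcompb2
    have h1pa : S.seq (S.unit - p) a = a := (S.sharp_absorb (S.sharp_compl hp) ha halep).1
    have hfin : a ≤ b - p := by
      calc a = S.seq (S.unit - p) a := h1pa.symm
        _ ≤ S.seq (S.unit - p) b := S.seq_mono_s7 (S.eff_one_sub hp.1) ha hb hab
        _ = b - p := hcompb2.symm
    rw [S.le_iff_sub]
    have e : b - (p + a) = (b - p) - a := by abel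
    rw [e]
    exact (S.le_iff_sub).mp hfin
  · have hss : S.seq (p + a) (p + a) = p + S.seq a a := by
      rw [S.s1 (p + a) p a hEs hp.1 ha hEs, ← hcomp_sp, ← hcomp_sa, hps, has]
    constructor
    · rintro ⟨-, h2⟩
      rw [hss] at h2
      exact ⟨ha, add_left_cancel h2⟩
    · rintro ⟨-, h2⟩
      exact ⟨hEs, by rw [hss, h2]⟩
end
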